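/- arXiv:1107.5194 — 7 statements merged into one kernel-verified Lean document; each statement's English description precedes it below -/
import Mathlib

section
/- Let δ > 0, let M be an m×n real matrix with all entries nonnegative, and let W be an m×r matrix and H an r×n matrix all of whose entries are at least δ (with m, n, r ≥ 1). Define the updated matrix W' entrywise by W'_{ip} = max(δ, W_{ip} · (M Hᵀ)_{ip} / (W H Hᵀ)_{ip}). Then the Frobenius norm of the residual does not increase: ‖M − W' H‖_F ≤ ‖M − W H‖_F. -/
/-!
Work row by row: with `a = W i`, `d = W' i - a`, `e = M i - a H` and `s = d H`,
`‖e - s‖² = ‖e‖² - 2⟨e, s⟩ + ‖s‖²`, so it suffices that `‖s‖² ≤ 2⟨e, s⟩`.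
Cauchy–Schwarz with weights `a_p H_pj` gives `‖s‖² ≤ Σ_p d_p² C_p / a_p` with `C = a H Hᵀ`,
while `⟨e, s⟩ = Σ_p d_p (B_p - C_p)` with `B = (M Hᵀ) i`. The unclamped update `t = a B / C`
satisfies `(t - a) C / a = B - C`, and clamping at `δ ≤ a` keeps `d_p` between `0` and
`2 (t_p - a_p)`, i.e. `d_p² ≤ 2 d_p (t_p - a_p)`; this is the inequality termwise.
-/

open Matrix

/-- The Frobenius norm of a real matrix: `‖A‖_F = (Σ_{i,j} A_{ij}²)^{1/2}`. -/
noncomputable def frobNorm {m n : ℕ} (A : Matrix (Fin m) (Fin n) ℝ) : ℝ :=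
  Real.sqrt (∑ i, ∑ j, (A i j) ^ 2)

theorem sq_max_sub_le {δ a : ℝ} (t : ℝ) (ha : δ ≤ a) :
    (max δ t - a) ^ 2 ≤ 2 * (max δ t - a) * (t - a) := by
  rcases le_total δ t with h | h
  · rw [max_eq_right h]; nlinarith [sq_nonneg (t - a)]
  · rw [max_eq_left h]; nlinarith

theorem sq_max_sub_div_mul_le {δ a : ℝ} (B C : ℝ) (hδ : 0 < δ) (ha : δ ≤ a) (hC : 0 < C) :
    (max δ (a * B / C) - a) ^ 2 / a * C ≤ 2 * (max δ (a * B / C) - a) * (B - C) := by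
  have ha0 : 0 < a := hδ.trans_le ha
  have hBC : (a * B / C - a) * (C / a) = B - C := by field_simp
  calc (max δ (a * B / C) - a) ^ 2 / a * C = (max δ (a * B / C) - a) ^ 2 * (C / a) := by ring
    _ ≤ 2 * (max δ (a * B / C) - a) * (a * B / C - a) * (C / a) :=
      mul_le_mul_of_nonneg_right (sq_max_sub_le _ ha) (by positivity)
    _ = 2 * (max δ (a * B / C) - a) * (B - C) := by rw [mul_assoc, hBC]

variable {ι κ : Type*} [Fintype ι] [Fintype κ]

theorem sum_vecMul_sq_le {a : ι → ℝ} {H : Matrix ι κ ℝ} (d : ι → ℝ) (ha : ∀ p, 0 < a p)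
    (hH : ∀ p j, 0 ≤ H p j) :
    ∑ j, (d ᵥ* H) j ^ 2 ≤ ∑ p, d p ^ 2 / a p * ((a ᵥ* H) ⬝ᵥ H p) := by
  have hcol (j : κ) : (d ᵥ* H) j ^ 2 ≤ (a ᵥ* H) j * ∑ p, d p ^ 2 / a p * H p j :=
    Finset.sum_sq_le_sum_mul_sum_of_sq_le_mul _
      (fun p _ => mul_nonneg (ha p).le (hH p j))
      (fun p _ => mul_nonneg (div_nonneg (sq_nonneg _) (ha p).le) (hH p j))
      (fun p _ => le_of_eq <| by field_simp [(ha p).ne'])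
  calc ∑ j, (d ᵥ* H) j ^ 2 ≤ ∑ j, (a ᵥ* H) j * ∑ p, d p ^ 2 / a p * H p j :=
        Finset.sum_le_sum fun j _ => hcol j
    _ = ∑ p, d p ^ 2 / a p * ((a ᵥ* H) ⬝ᵥ H p) := by
      simp only [dotProduct, Finset.mul_sum]
      rw [Finset.sum_comm]
      exact Finset.sum_congr rfl fun p _ => Finset.sum_congr rfl fun j _ => by ring

/-- Row `i` of the update of `W` is `truncMU δ (M i) H (W i)`. -/
noncomputable def truncMU (δ : ℝ) (m : κ → ℝ) (H : Matrix ι κ ℝ) (a : ι → ℝ) : ι → ℝ :=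
  fun p => max δ (a p * (m ⬝ᵥ H p) / ((a ᵥ* H) ⬝ᵥ H p))

theorem sum_sq_sub_vecMul_truncMU_le [Nonempty κ] {δ : ℝ} (m : κ → ℝ) {a : ι → ℝ}
    {H : Matrix ι κ ℝ} (hδ : 0 < δ) (ha : ∀ p, δ ≤ a p) (hH : ∀ p j, 0 < H p j) :
    ∑ j, (m - truncMU δ m H a ᵥ* H) j ^ 2 ≤ ∑ j, (m - a ᵥ* H) j ^ 2 := by
  set d := truncMU δ m H a - a
  set e := m - a ᵥ* H
  set s := d ᵥ* H
  have ha0 (p : ι) : 0 < a p := hδ.trans_le (ha p)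
  have hC (p : ι) : 0 < (a ᵥ* H) ⬝ᵥ H p :=
    Finset.sum_pos (fun j _ => mul_pos (Finset.sum_pos (fun q _ => mul_pos (ha0 q) (hH q j))
      ⟨p, Finset.mem_univ _⟩) (hH p j)) Finset.univ_nonempty
  have hres : m - truncMU δ m H a ᵥ* H = e - s := by
    simp only [e, s, d, sub_vecMul]; abel
  have hcross : ∑ j, e j * s j = ∑ p, d p * (m ⬝ᵥ H p - (a ᵥ* H) ⬝ᵥ H p) := by
    change e ⬝ᵥ (d ᵥ* H) = d ⬝ᵥ fun p => m ⬝ᵥ H p - (a ᵥ* H) ⬝ᵥ H p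
    rw [dotProduct_comm, ← dotProduct_mulVec]
    congr 1
    ext p
    rw [mulVec, dotProduct_comm, sub_dotProduct]
  have hkey : ∑ j, s j ^ 2 ≤ 2 * ∑ j, e j * s j := calc
    ∑ j, s j ^ 2 ≤ ∑ p, d p ^ 2 / a p * ((a ᵥ* H) ⬝ᵥ H p) :=
      sum_vecMul_sq_le d ha0 fun p j => (hH p j).le
    _ ≤ ∑ p, 2 * d p * (m ⬝ᵥ H p - (a ᵥ* H) ⬝ᵥ H p) :=
      Finset.sum_le_sum fun p _ => sq_max_sub_div_mul_le _ _ hδ (ha p) (hC p)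
    _ = 2 * ∑ j, e j * s j := by rw [hcross, Finset.mul_sum]; simp only [mul_assoc]
  calc ∑ j, (m - truncMU δ m H a ᵥ* H) j ^ 2
      = ∑ j, e j ^ 2 - 2 * ∑ j, e j * s j + ∑ j, s j ^ 2 := by
        rw [hres, Finset.mul_sum, ← Finset.sum_sub_distrib, ← Finset.sum_add_distrib]
        exact Finset.sum_congr rfl fun j _ => by simp only [Pi.sub_apply]; ring
    _ ≤ ∑ j, e j ^ 2 := by linarith

theorem mu_delta_update_W_nonincreasing_general {m n r : ℕ}
    (hn : 1 ≤ n)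
    (δ : ℝ) (hδ : 0 < δ)
    (M : Matrix (Fin m) (Fin n) ℝ)
    (W : Matrix (Fin m) (Fin r) ℝ) (hW : ∀ i p, δ ≤ W i p)
    (H : Matrix (Fin r) (Fin n) ℝ) (hH : ∀ p j, δ ≤ H p j)
    (W' : Matrix (Fin m) (Fin r) ℝ)
    (hW' : ∀ i p, W' i p = max δ (W i p * (M * Hᵀ) i p / (W * H * Hᵀ) i p)) :
    frobNorm (M - W' * H) ≤ frobNorm (M - W * H) := by
  have : Nonempty (Fin n) := ⟨⟨0, hn⟩⟩
  have hrow (i : Fin m) : W' i = truncMU δ (M i) H (W i) := funext (hW' i)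
  refine Real.sqrt_le_sqrt (Finset.sum_le_sum fun i _ => ?_)
  have := sum_sq_sub_vecMul_truncMU_le (M i) hδ (hW i) fun p j => hδ.trans_le (hH p j)
  rwa [← hrow] at this

/-- The δ-truncated multiplicative update of `W` does not increase the
Frobenius norm of the residual `M - W H`. -/
theorem mu_delta_update_W_nonincreasing {m n r : ℕ}
    (hm : 1 ≤ m) (hn : 1 ≤ n) (hr : 1 ≤ r)
    (δ : ℝ) (hδ : 0 < δ)
    (M : Matrix (Fin m) (Fin n) ℝ) (hM : ∀ i j, 0 ≤ M i j)
    (W : Matrix (Fin m) (Fin r) ℝ) (hW : ∀ i p, δ ≤ W i p)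
    (H : Matrix (Fin r) (Fin n) ℝ) (hH : ∀ p j, δ ≤ H p j)
    (W' : Matrix (Fin m) (Fin r) ℝ)
    (hW' : ∀ i p, W' i p = max δ (W i p * (M * Hᵀ) i p / (W * H * Hᵀ) i p)) :
    frobNorm (M - W' * H) ≤ frobNorm (M - W * H) :=
  mu_delta_update_W_nonincreasing_general hn δ hδ M W hW H hH W' hW'
end

section
/- Let δ > 0, let M be an m×n real matrix with all entries nonnegative, and let W be an m×r matrix and H an r×n matrix all of whose entries are at least δ (with m, n, r ≥ 1). Define the updated matrix H' entrywise by H'_{pj} = max(δ, H_{pj} · (Wᵀ M)_{pj} / (Wᵀ W H)_{pj}). Then ‖M − W H'‖_F ≤ ‖M − W H‖_F. -/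
/-!
The update acts on each column `h` of `H` separately, with `v` the matching column of `M`.
The squared residual `‖v - W h'‖²` is a quadratic in `h'` with Hessian `WᵀW`, and since `WᵀW` is
entrywise nonnegative it is dominated by the diagonal form `diag((WᵀW h)_p / h_p)` (Lee–Seung).
This gives a separable quadratic majorizer touching the residual at `h' = h`. In coordinate `p`
its unconstrained minimizer is `x = h_p (Wᵀv)_p / (WᵀW h)_p`, so over `[δ, ∞)` it is minimized by
`max δ x`, which is the truncated update; hence the majorizer, and with it the residual, does not
increase.
-/

open Matrix Finset

theorem sq_max_sub_le_sq_sub {δ x h : ℝ} (hh : δ ≤ h) :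
    (max δ x - x) ^ 2 ≤ (h - x) ^ 2 := by
  rcases le_total δ x with hx | hx
  · simp [max_eq_right hx, sq_nonneg]
  · rw [max_eq_left hx]
    exact pow_le_pow_left₀ (sub_nonneg.2 hx) (by linarith) 2

theorem truncated_step_majorizer_nonpos {δ b c h : ℝ} (hb : 0 < b) (hδh : δ ≤ h) (hh : 0 < h) :
    2 * (b - c) * (max δ (h * c / b) - h) + b / h * (max δ (h * c / b) - h) ^ 2 ≤ 0 := by
  set x := h * c / b
  have key : 2 * (b - c) * (max δ x - h) + b / h * (max δ x - h) ^ 2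
      = b / h * ((max δ x - x) ^ 2 - (h - x) ^ 2) := by
    simp only [x]; field_simp; ring
  rw [key]
  exact mul_nonpos_of_nonneg_of_nonpos (by positivity)
    (sub_nonpos.2 (sq_max_sub_le_sq_sub hδh))

section

variable {ι κ : Type*} [Fintype ι] [Fintype κ]

theorem dotProduct_mulVec_le_sum_div_mul_sq {A : Matrix κ κ ℝ} (hA : A.IsSymm)
    (hA0 : ∀ p q, 0 ≤ A p q) {h : κ → ℝ} (hh : ∀ p, 0 < h p) (d : κ → ℝ) :
    d ⬝ᵥ (A *ᵥ d) ≤ ∑ p, (A *ᵥ h) p / h p * d p ^ 2 := by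
  set T : κ → κ → ℝ := fun p q => A p q * h q / h p * d p ^ 2
  have amgm : ∀ p q, 2 * (d p * (A p q * d q)) ≤ T p q + T q p := by
    intro p q
    have hp := hh p
    have hq := hh q
    have hsq : T p q + T q p - 2 * (d p * (A p q * d q))
        = A p q * ((h q * d p - h p * d q) ^ 2 / (h p * h q)) := by
      simp only [T, hA.apply p q]; field_simp; ring
    have : 0 ≤ A p q * ((h q * d p - h p * d q) ^ 2 / (h p * h q)) := by
      have := hA0 p q; positivity
    linarith
  calc d ⬝ᵥ (A *ᵥ d) = ∑ p, ∑ q, d p * (A p q * d q) := by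
        simp only [dotProduct, mulVec, mul_sum]
    _ ≤ (∑ p, ∑ q, (T p q + T q p)) / 2 := by
        rw [le_div_iff₀ two_pos, sum_mul]
        refine sum_le_sum fun p _ => ?_
        rw [sum_mul]
        exact sum_le_sum fun q _ => by linarith [amgm p q]
    _ = ∑ p, ∑ q, T p q := by
        simp only [sum_add_distrib]
        rw [sum_comm (f := fun p q => T q p)]
        ring
    _ = ∑ p, (A *ᵥ h) p / h p * d p ^ 2 := by
        simp only [mulVec, dotProduct, sum_div, sum_mul, T]

theorem dotProduct_self_sub_mulVec {R : Type*} [CommRing R] (W : Matrix ι κ R) (e : ι → R)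
    (d : κ → R) :
    (e - W *ᵥ d) ⬝ᵥ (e - W *ᵥ d)
      = e ⬝ᵥ e - 2 * (Wᵀ *ᵥ e) ⬝ᵥ d + d ⬝ᵥ ((Wᵀ * W) *ᵥ d) := by
  have cross : e ⬝ᵥ (W *ᵥ d) = (Wᵀ *ᵥ e) ⬝ᵥ d := by
    rw [dotProduct_mulVec, mulVec_transpose]
  have quad : (W *ᵥ d) ⬝ᵥ (W *ᵥ d) = d ⬝ᵥ ((Wᵀ * W) *ᵥ d) := by
    rw [← mulVec_mulVec, dotProduct_mulVec d, vecMul_transpose]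
  rw [sub_dotProduct, dotProduct_sub, dotProduct_sub, dotProduct_comm (W *ᵥ d) e, cross, quad]
  ring

noncomputable def truncatedMulUpdate (δ : ℝ) (W : Matrix ι κ ℝ) (v : ι → ℝ) (h : κ → ℝ) :
    κ → ℝ :=
  fun p => max δ (h p * (Wᵀ *ᵥ v) p / ((Wᵀ * W) *ᵥ h) p)

theorem residual_truncatedMulUpdate_le {δ : ℝ} (hδ : 0 < δ) {W : Matrix ι κ ℝ}
    (hW : ∀ i p, 0 ≤ W i p) (v : ι → ℝ) {h : κ → ℝ} (hh : ∀ p, δ ≤ h p)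
    (hWh : ∀ p, 0 < ((Wᵀ * W) *ᵥ h) p) :
    (v - W *ᵥ truncatedMulUpdate δ W v h) ⬝ᵥ (v - W *ᵥ truncatedMulUpdate δ W v h)
      ≤ (v - W *ᵥ h) ⬝ᵥ (v - W *ᵥ h) := by
  set d := truncatedMulUpdate δ W v h - h
  have hpos : ∀ p, 0 < h p := fun p => hδ.trans_le (hh p)
  have hsplit : v - W *ᵥ truncatedMulUpdate δ W v h = (v - W *ᵥ h) - W *ᵥ d := by
    simp only [d, mulVec_sub]; abel
  have hgrad : Wᵀ *ᵥ (v - W *ᵥ h) = Wᵀ *ᵥ v - (Wᵀ * W) *ᵥ h := by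
    rw [mulVec_sub, mulVec_mulVec]
  have hmajorize := dotProduct_mulVec_le_sum_div_mul_sq (transpose_mul _ _)
    (fun p q => sum_nonneg fun i _ => mul_nonneg (hW i p) (hW i q)) hpos d
  have hdescent : ∑ p, (2 * (((Wᵀ * W) *ᵥ h) p - (Wᵀ *ᵥ v) p) * d p
      + ((Wᵀ * W) *ᵥ h) p / h p * d p ^ 2) ≤ 0 :=
    sum_nonpos fun p _ => truncated_step_majorizer_nonpos (hWh p) (hh p) (hpos p)
  have hlinear : -(2 * (Wᵀ *ᵥ v - (Wᵀ * W) *ᵥ h) ⬝ᵥ d)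
      = ∑ p, 2 * (((Wᵀ * W) *ᵥ h) p - (Wᵀ *ᵥ v) p) * d p := by
    simp only [dotProduct, mul_sum, ← sum_neg_distrib, Pi.sub_apply]
    exact sum_congr rfl fun p _ => by ring
  rw [sum_add_distrib] at hdescent
  rw [hsplit, dotProduct_self_sub_mulVec, hgrad]
  linarith

theorem transpose_mul_self_mulVec_pos [Nonempty ι] {W : Matrix ι κ ℝ} (hW : ∀ i p, 0 < W i p)
    {h : κ → ℝ} (hh : ∀ p, 0 < h p) (p : κ) : 0 < ((Wᵀ * W) *ᵥ h) p :=
  sum_pos (fun q _ => mul_pos (sum_pos (fun i _ => mul_pos (hW i p) (hW i q)) univ_nonempty)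
    (hh q)) ⟨p, mem_univ p⟩

end

theorem frobNorm_le_of_forall_col {m n : ℕ} {A B : Matrix (Fin m) (Fin n) ℝ}
    (h : ∀ j, Aᵀ j ⬝ᵥ Aᵀ j ≤ Bᵀ j ⬝ᵥ Bᵀ j) : frobNorm A ≤ frobNorm B := by
  refine Real.sqrt_le_sqrt ?_
  rw [sum_comm, sum_comm (f := fun i j => B i j ^ 2)]
  exact sum_le_sum fun j _ => by simpa only [dotProduct, transpose_apply, sq] using h j

theorem mu_delta_update_H_nonincreasing_general {m n r : ℕ}
    (hm : 1 ≤ m)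
    (δ : ℝ) (hδ : 0 < δ)
    (M : Matrix (Fin m) (Fin n) ℝ)
    (W : Matrix (Fin m) (Fin r) ℝ) (hW : ∀ i p, δ ≤ W i p)
    (H : Matrix (Fin r) (Fin n) ℝ) (hH : ∀ p j, δ ≤ H p j)
    (H' : Matrix (Fin r) (Fin n) ℝ)
    (hH' : ∀ p j, H' p j = max δ (H p j * (Wᵀ * M) p j / (Wᵀ * W * H) p j)) :
    frobNorm (M - W * H') ≤ frobNorm (M - W * H) := by
  have : Nonempty (Fin m) := ⟨⟨0, hm⟩⟩
  have hWpos : ∀ i p, 0 < W i p := fun i p => hδ.trans_le (hW i p)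
  have hcol : ∀ j, H'ᵀ j = truncatedMulUpdate δ W (Mᵀ j) (Hᵀ j) :=
    fun j => funext fun p => hH' p j
  refine frobNorm_le_of_forall_col fun j => ?_
  change (Mᵀ j - W *ᵥ H'ᵀ j) ⬝ᵥ (Mᵀ j - W *ᵥ H'ᵀ j)
    ≤ (Mᵀ j - W *ᵥ Hᵀ j) ⬝ᵥ (Mᵀ j - W *ᵥ Hᵀ j)
  rw [hcol]
  exact residual_truncatedMulUpdate_le hδ (fun i p => (hWpos i p).le) (Mᵀ j) (fun p => hH p j)
    (transpose_mul_self_mulVec_pos hWpos fun p => hδ.trans_le (hH p j))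

/-- The δ-truncated multiplicative update of `H` does not increase the
Frobenius norm of the residual `M - W H`. -/
theorem mu_delta_update_H_nonincreasing {m n r : ℕ}
    (hm : 1 ≤ m) (hn : 1 ≤ n) (hr : 1 ≤ r)
    (δ : ℝ) (hδ : 0 < δ)
    (M : Matrix (Fin m) (Fin n) ℝ) (hM : ∀ i j, 0 ≤ M i j)
    (W : Matrix (Fin m) (Fin r) ℝ) (hW : ∀ i p, δ ≤ W i p)
    (H : Matrix (Fin r) (Fin n) ℝ) (hH : ∀ p j, δ ≤ H p j)
    (H' : Matrix (Fin r) (Fin n) ℝ)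
    (hH' : ∀ p j, H' p j = max δ (H p j * (Wᵀ * M) p j / (Wᵀ * W * H) p j)) :
    frobNorm (M - W * H') ≤ frobNorm (M - W * H) :=
  mu_delta_update_H_nonincreasing_general hm δ hδ M W hW H hH H' hH'
end

section
/- Let δ > 0, let M be an m×n real matrix with all entries nonnegative, and let W ∈ ℝ^{m×r}, H ∈ ℝ^{r×n} have all entries at least δ (with m, n, r ≥ 1). Suppose (W, H) is a fixed point of both δ-truncated multiplicative updates, i.e. W_{ip} = max(δ, W_{ip} (M Hᵀ)_{ip} / (W H Hᵀ)_{ip}) for all i, p, and H_{pj} = max(δ, H_{pj} (Wᵀ M)_{pj} / (Wᵀ W H)_{pj}) for all p, j. Then (W, H) satisfies the first-order stationarity conditions of the problem min_{W ≥ δ, H ≥ δ} ‖M − WH‖_F²: for every (i, p), (W H Hᵀ − M Hᵀ)_{ip} ≥ 0, and (W H Hᵀ − M Hᵀ)_{ip} = 0 whenever W_{ip} > δ; and for every (p, j), (Wᵀ W H − Wᵀ M)_{pj} ≥ 0, and (Wᵀ W H − Wᵀ M)_{pj} = 0 whenever H_{pj} > δ. -/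
/-!
Entrywise, the update multiplies `W i p` by `(M Hᵀ) i p / (W H Hᵀ) i p`, whose denominator is
positive because all entries of `W` and `H` are at least `δ > 0`. At a fixed point this factor is at
most `1`, and it equals `1` wherever the truncation at `δ` is inactive; these are exactly the sign
conditions on the gradient `W H Hᵀ - M Hᵀ`. The same holds for `H`.
-/

open Matrix

section TruncatedUpdate

variable {δ w a b : ℝ}

lemma le_of_eq_max_mul_div (hw : 0 < w) (hb : 0 < b) (hfix : w = max δ (w * a / b)) :
    a ≤ b := by
  have hle : w * a / b ≤ w := (le_max_right _ _).trans_eq hfix.symm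
  rw [div_le_iff₀ hb] at hle
  exact le_of_mul_le_mul_left hle hw

lemma eq_of_eq_max_mul_div_of_lt (hw : 0 < w) (hb : 0 < b) (hfix : w = max δ (w * a / b))
    (hδw : δ < w) : a = b := by
  have hupd : w * a / b = w := by
    rcases max_choice δ (w * a / b) with h | h
    · exact absurd (hfix.trans h) hδw.ne'
    · exact (hfix.trans h).symm
  rw [div_eq_iff hb.ne'] at hupd
  exact mul_left_cancel₀ hw.ne' hupd

end TruncatedUpdate

lemma Matrix.mul_apply_pos {ι κ μ R : Type*} [Fintype κ] [Nonempty κ]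
    [Semiring R] [PartialOrder R] [IsStrictOrderedRing R]
    {A : Matrix ι κ R} {B : Matrix κ μ R} (hA : ∀ i k, 0 < A i k) (hB : ∀ k j, 0 < B k j)
    (i : ι) (j : μ) : 0 < (A * B) i j :=
  Finset.sum_pos (fun k _ => mul_pos (hA i k) (hB k j)) Finset.univ_nonempty

theorem stationary_of_eq_max_mul_div {ι κ : Type*} {δ : ℝ} {X N D : Matrix ι κ ℝ}
    (hX : ∀ i j, 0 < X i j) (hD : ∀ i j, 0 < D i j)
    (hfix : ∀ i j, X i j = max δ (X i j * N i j / D i j)) :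
    (∀ i j, 0 ≤ (D - N) i j) ∧ (∀ i j, δ < X i j → (D - N) i j = 0) :=
  ⟨fun i j => sub_nonneg.mpr (le_of_eq_max_mul_div (hX i j) (hD i j) (hfix i j)),
    fun i j hδ => sub_eq_zero.mpr
      (eq_of_eq_max_mul_div_of_lt (hX i j) (hD i j) (hfix i j) hδ).symm⟩

theorem mu_delta_fixed_point_is_stationary_general {m n r : ℕ}
    (hm : 1 ≤ m) (hn : 1 ≤ n)
    (δ : ℝ) (hδ : 0 < δ)
    (M : Matrix (Fin m) (Fin n) ℝ)
    (W : Matrix (Fin m) (Fin r) ℝ) (hW : ∀ i p, δ ≤ W i p)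
    (H : Matrix (Fin r) (Fin n) ℝ) (hH : ∀ p j, δ ≤ H p j)
    (hfixW : ∀ i p, W i p = max δ (W i p * (M * Hᵀ) i p / (W * H * Hᵀ) i p))
    (hfixH : ∀ p j, H p j = max δ (H p j * (Wᵀ * M) p j / (Wᵀ * W * H) p j)) :
    (∀ i p, 0 ≤ (W * H * Hᵀ - M * Hᵀ) i p) ∧
    (∀ i p, δ < W i p → (W * H * Hᵀ - M * Hᵀ) i p = 0) ∧
    (∀ p j, 0 ≤ (Wᵀ * W * H - Wᵀ * M) p j) ∧
    (∀ p j, δ < H p j → (Wᵀ * W * H - Wᵀ * M) p j = 0) := by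
  have : Nonempty (Fin m) := Fin.pos_iff_nonempty.mp hm
  have : Nonempty (Fin n) := Fin.pos_iff_nonempty.mp hn
  have hW0 : ∀ i p, 0 < W i p := fun i p => hδ.trans_le (hW i p)
  have hH0 : ∀ p j, 0 < H p j := fun p j => hδ.trans_le (hH p j)
  have hWHHt : ∀ i p, 0 < (W * H * Hᵀ) i p := fun i p =>
    have : Nonempty (Fin r) := ⟨p⟩
    mul_apply_pos (mul_apply_pos hW0 hH0) (fun j p => hH0 p j) i p
  have hWtWH : ∀ p j, 0 < (Wᵀ * W * H) p j := fun p j =>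
    have : Nonempty (Fin r) := ⟨p⟩
    mul_apply_pos (mul_apply_pos (fun p i => hW0 i p) hW0) hH0 p j
  obtain ⟨hgradW, hgradW_eq⟩ := stationary_of_eq_max_mul_div hW0 hWHHt hfixW
  obtain ⟨hgradH, hgradH_eq⟩ := stationary_of_eq_max_mul_div hH0 hWtWH hfixH
  exact ⟨hgradW, hgradW_eq, hgradH, hgradH_eq⟩

/-- A fixed point of both δ-truncated multiplicative updates satisfies the
first-order (KKT) stationarity conditions of `min_{W ≥ δ, H ≥ δ} ‖M − WH‖_F²`. -/
theorem mu_delta_fixed_point_is_stationary {m n r : ℕ}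
    (hm : 1 ≤ m) (hn : 1 ≤ n) (hr : 1 ≤ r)
    (δ : ℝ) (hδ : 0 < δ)
    (M : Matrix (Fin m) (Fin n) ℝ) (hM : ∀ i j, 0 ≤ M i j)
    (W : Matrix (Fin m) (Fin r) ℝ) (hW : ∀ i p, δ ≤ W i p)
    (H : Matrix (Fin r) (Fin n) ℝ) (hH : ∀ p j, δ ≤ H p j)
    (hfixW : ∀ i p, W i p = max δ (W i p * (M * Hᵀ) i p / (W * H * Hᵀ) i p))
    (hfixH : ∀ p j, H p j = max δ (H p j * (Wᵀ * M) p j / (Wᵀ * W * H) p j)) :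
    (∀ i p, 0 ≤ (W * H * Hᵀ - M * Hᵀ) i p) ∧
    (∀ i p, δ < W i p → (W * H * Hᵀ - M * Hᵀ) i p = 0) ∧
    (∀ p j, 0 ≤ (Wᵀ * W * H - Wᵀ * M) p j) ∧
    (∀ p j, δ < H p j → (Wᵀ * W * H - Wᵀ * M) p j = 0) :=
  mu_delta_fixed_point_is_stationary_general hm hn δ hδ M W hW H hH hfixW hfixH
end

section
/- Let M be an m×n real matrix with all entries nonnegative, and let W ∈ ℝ^{m×r} and H ∈ ℝ^{r×n} have all entries strictly positive (with m, n, r ≥ 1). Define the multiplicative update W' of Lee and Seung entrywise by W'_{ip} = W_{ip} · (M Hᵀ)_{ip} / (W H Hᵀ)_{ip}. Then ‖M − W' H‖_F ≤ ‖M − W H‖_F. -/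
/-!
Let `A = H Hᵀ` and write the update of a row `w` of `W` as `w' = w + d`. The residual norm is
quadratic in the row: `‖v - w' H‖² = ‖v - w H‖² - 2 d ⬝ (v Hᵀ - w A) + d ⬝ d A`. The update rule
turns the cross term into `T = Σ_p (w A)_p d_p² / w_p ≥ 0`, and since `A` is symmetric with
nonnegative entries, the diagonal matrix `diag ((w A) / w)` dominates `A` as a quadratic form, so
`d ⬝ d A ≤ T`. Hence each row residual, and therefore the Frobenius norm, decreases by at least `T`.
-/

open Matrix

section Majorization

variable {ι : Type*} [Fintype ι]

theorem sum_sum_nonneg_of_add_swap_nonneg (F : ι → ι → ℝ) (h : ∀ p q, 0 ≤ F p q + F q p) :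
    0 ≤ ∑ p, ∑ q, F p q := by
  have hswap : ∑ p, ∑ q, F q p = ∑ p, ∑ q, F p q := Finset.sum_comm
  have hsum : 0 ≤ ∑ p, ∑ q, (F p q + F q p) :=
    Finset.sum_nonneg fun p _ => Finset.sum_nonneg fun q _ => h p q
  simp only [Finset.sum_add_distrib] at hsum
  linarith

theorem dotProduct_vecMul_le_sum_vecMul_mul_sq_div {A : Matrix ι ι ℝ} (hA : A.IsSymm)
    (hA₀ : ∀ p q, 0 ≤ A p q) {w : ι → ℝ} (hw : ∀ p, 0 < w p) (x : ι → ℝ) :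
    x ⬝ᵥ (x ᵥ* A) ≤ ∑ p, (w ᵥ* A) p * x p ^ 2 / w p := by
  set F : ι → ι → ℝ := fun p q => A q p * (w q * x p ^ 2 / w p - x q * x p)
  have hdiff : ∑ p, (w ᵥ* A) p * x p ^ 2 / w p - x ⬝ᵥ (x ᵥ* A) = ∑ p, ∑ q, F p q := by
    simp only [F, vecMul, dotProduct, Finset.sum_mul, Finset.sum_div, Finset.mul_sum,
      mul_sub, Finset.sum_sub_distrib]
    congr 1 <;> refine Finset.sum_congr rfl fun p _ => Finset.sum_congr rfl fun q _ => ?_ <;> ring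
  have hswap : ∀ p q, F p q + F q p = A p q * (w q * x p - w p * x q) ^ 2 / (w p * w q) := by
    intro p q
    simp only [F, hA.apply p q]
    field_simp [(hw p).ne', (hw q).ne']
    ring
  have hF : 0 ≤ ∑ p, ∑ q, F p q := sum_sum_nonneg_of_add_swap_nonneg F fun p q => by
    rw [hswap]
    exact div_nonneg (mul_nonneg (hA₀ p q) (sq_nonneg _)) (mul_pos (hw p) (hw q)).le
  linarith

end Majorization

theorem mul_transpose_self_nonneg {ι κ : Type*} [Fintype κ] {H : Matrix ι κ ℝ}
    (hH : ∀ p j, 0 ≤ H p j) (p q : ι) : 0 ≤ (H * Hᵀ) p q :=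
  Finset.sum_nonneg fun j _ => mul_nonneg (hH p j) (hH q j)

section RowUpdate

variable {ι κ : Type*} [Fintype ι] [Fintype κ]

theorem sub_add_vecMul_dotProduct_self {R : Type*} [CommRing R] (H : Matrix ι κ R)
    (v : κ → R) (w d : ι → R) :
    (v - (w + d) ᵥ* H) ⬝ᵥ (v - (w + d) ᵥ* H) =
      (v - w ᵥ* H) ⬝ᵥ (v - w ᵥ* H) - 2 * d ⬝ᵥ (v ᵥ* Hᵀ - w ᵥ* (H * Hᵀ))
        + d ⬝ᵥ (d ᵥ* (H * Hᵀ)) := by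
  have hcross : v ᵥ* Hᵀ - w ᵥ* (H * Hᵀ) = (v - w ᵥ* H) ᵥ* Hᵀ := by
    rw [sub_vecMul, vecMul_vecMul]
  have hmove : ∀ u, u ⬝ᵥ (d ᵥ* H) = d ⬝ᵥ (u ᵥ* Hᵀ) := fun u => by
    rw [dotProduct_comm, vecMul_transpose, dotProduct_mulVec]
  rw [add_vecMul, ← sub_sub, hcross, ← vecMul_vecMul]
  generalize v - w ᵥ* H = e
  rw [sub_dotProduct, dotProduct_sub, dotProduct_sub, dotProduct_comm (d ᵥ* H) e, hmove e,
    hmove (d ᵥ* H)]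
  ring

theorem vecMul_mul_transpose_self_pos [Nonempty κ] {H : Matrix ι κ ℝ} (hH : ∀ p j, 0 < H p j)
    {w : ι → ℝ} (hw : ∀ p, 0 < w p) (p : ι) : 0 < (w ᵥ* (H * Hᵀ)) p :=
  Finset.sum_pos (fun q _ => mul_pos (hw q) <|
      Finset.sum_pos (fun j _ => mul_pos (hH q j) (hH p j)) Finset.univ_nonempty)
    ⟨p, Finset.mem_univ p⟩

theorem dotProduct_self_sub_vecMul_le_of_mul_eq {H : Matrix ι κ ℝ} (hH : ∀ p j, 0 ≤ H p j)
    {v : κ → ℝ} {w w' : ι → ℝ} (hw : ∀ p, 0 < w p)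
    (hw' : ∀ p, (w ᵥ* (H * Hᵀ)) p * w' p = w p * (v ᵥ* Hᵀ) p) :
    (v - w' ᵥ* H) ⬝ᵥ (v - w' ᵥ* H) ≤ (v - w ᵥ* H) ⬝ᵥ (v - w ᵥ* H) := by
  set s := w ᵥ* (H * Hᵀ)
  set d := w' - w
  have hcross : d ⬝ᵥ (v ᵥ* Hᵀ - s) = ∑ p, s p * d p ^ 2 / w p :=
    Finset.sum_congr rfl fun p _ => by
      simp only [d, Pi.sub_apply]
      field_simp [(hw p).ne']
      linear_combination -(w' p - w p) * hw' p
  have hT : 0 ≤ ∑ p, s p * d p ^ 2 / w p :=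
    Finset.sum_nonneg fun p _ => div_nonneg (mul_nonneg
      (Finset.sum_nonneg fun q _ => mul_nonneg (hw q).le (mul_transpose_self_nonneg hH q p))
      (sq_nonneg _)) (hw p).le
  have hquad : d ⬝ᵥ (d ᵥ* (H * Hᵀ)) ≤ ∑ p, s p * d p ^ 2 / w p :=
    dotProduct_vecMul_le_sum_vecMul_mul_sq_div
      (by simp only [IsSymm, transpose_mul, transpose_transpose]) (mul_transpose_self_nonneg hH)
      hw d
  have hexpand := sub_add_vecMul_dotProduct_self H v w d
  rw [add_sub_cancel] at hexpand
  linarith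

end RowUpdate

theorem mu_lee_seung_update_nonincreasing_general {m n r : ℕ}
    (hn : 1 ≤ n)
    (M : Matrix (Fin m) (Fin n) ℝ)
    (W : Matrix (Fin m) (Fin r) ℝ) (hW : ∀ i p, 0 < W i p)
    (H : Matrix (Fin r) (Fin n) ℝ) (hH : ∀ p j, 0 < H p j)
    (W' : Matrix (Fin m) (Fin r) ℝ)
    (hW' : ∀ i p, W' i p = W i p * (M * Hᵀ) i p / (W * H * Hᵀ) i p) :
    frobNorm (M - W' * H) ≤ frobNorm (M - W * H) := by
  have : Nonempty (Fin n) := ⟨⟨0, hn⟩⟩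
  refine Real.sqrt_le_sqrt (Finset.sum_le_sum fun i _ => ?_)
  have hrow : ∀ p, (W i ᵥ* (H * Hᵀ)) p * W' i p = W i p * (M i ᵥ* Hᵀ) p := fun p => by
    rw [hW', Matrix.mul_assoc, mul_apply_eq_vecMul, mul_apply_eq_vecMul,
      mul_div_cancel₀ _ (vecMul_mul_transpose_self_pos hH (hW i) p).ne']
  simpa only [sq, dotProduct, Matrix.sub_apply, mul_apply_eq_vecMul, Pi.sub_apply] using
    dotProduct_self_sub_vecMul_le_of_mul_eq (fun p j => (hH p j).le) (hW i) hrow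

/-- The multiplicative update of Lee and Seung does not increase the
Frobenius norm of the residual `M - W H`. -/
theorem mu_lee_seung_update_nonincreasing {m n r : ℕ}
    (hm : 1 ≤ m) (hn : 1 ≤ n) (hr : 1 ≤ r)
    (M : Matrix (Fin m) (Fin n) ℝ) (hM : ∀ i j, 0 ≤ M i j)
    (W : Matrix (Fin m) (Fin r) ℝ) (hW : ∀ i p, 0 < W i p)
    (H : Matrix (Fin r) (Fin n) ℝ) (hH : ∀ p j, 0 < H p j)
    (W' : Matrix (Fin m) (Fin r) ℝ)
    (hW' : ∀ i p, W' i p = W i p * (M * Hᵀ) i p / (W * H * Hᵀ) i p) :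
    frobNorm (M - W' * H) ≤ frobNorm (M - W * H) :=
  mu_lee_seung_update_nonincreasing_general hn M W hW H hH W' hW'
end

section
/- Let M ∈ ℝ^{m×n}, W ∈ ℝ^{m×r}, H ∈ ℝ^{r×n}, and fix an index p with 1 ≤ p ≤ r such that the p-th row H_{p:} of H is nonzero. Define w* ∈ ℝ^m entrywise by w*_i = max(0, ((M Hᵀ)_{ip} − Σ_{l≠p} W_{il} (H Hᵀ)_{lp}) / (H Hᵀ)_{pp}). Then w* is the unique solution of min_{w ∈ ℝ^m, w ≥ 0} ‖M − W[p←w] H‖_F², where W[p←w] denotes the matrix obtained from W by replacing its p-th column with w: for every w ≥ 0 with w ≠ w*, ‖M − W[p←w*] H‖_F < ‖M − W[p←w] H‖_F. -/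
/-!
Only the `p`-th column varies, and the residual is `R - w (H_{p:})` with `R = M - W[p←0] H`, so
the squared Frobenius norm splits into independent rows. In row `i` it is a strictly convex
quadratic `‖H_{p:}‖² (t - xᵢ)² + const` in `t = wᵢ`, with `xᵢ = ⟨R_{i:}, H_{p:}⟩ / ‖H_{p:}‖²`;
on `t ≥ 0` its unique minimiser is the projection `max 0 xᵢ`, which is exactly the HALS formula.
-/

open Matrix Finset

lemma sq_max_zero_sub_lt_sq_sub {x t : ℝ} (ht : 0 ≤ t) (hne : t ≠ max 0 x) :
    (max 0 x - x) ^ 2 < (t - x) ^ 2 := by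
  rcases le_or_gt x 0 with hx | hx
  · rw [max_eq_left hx] at hne ⊢
    have : 0 < t := lt_of_le_of_ne ht hne.symm
    nlinarith
  · rw [max_eq_right hx.le] at hne ⊢
    rw [sub_self, sq, zero_mul]
    exact pow_two_pos_of_ne_zero (sub_ne_zero.mpr hne)

section LeastSquares

variable {ι : Type*} [Fintype ι]

lemma sum_sq_sub_mul_eq (u v : ι → ℝ) (hv : v ⬝ᵥ v ≠ 0) (s : ℝ) :
    ∑ j, (u j - s * v j) ^ 2 =
      u ⬝ᵥ u - (u ⬝ᵥ v) ^ 2 / (v ⬝ᵥ v) + v ⬝ᵥ v * (s - u ⬝ᵥ v / v ⬝ᵥ v) ^ 2 := by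
  have hexpand : ∑ j, (u j - s * v j) ^ 2 = u ⬝ᵥ u - 2 * s * (u ⬝ᵥ v) + s ^ 2 * (v ⬝ᵥ v) := by
    simp only [dotProduct, mul_sum, ← sum_sub_distrib, ← sum_add_distrib]
    exact sum_congr rfl fun j _ => by ring
  rw [hexpand]
  field_simp
  ring

lemma sum_sq_sub_max_zero_mul_lt {u v : ι → ℝ} (hv : v ≠ 0) {t : ℝ} (ht : 0 ≤ t)
    (hne : t ≠ max 0 (u ⬝ᵥ v / v ⬝ᵥ v)) :
    ∑ j, (u j - max 0 (u ⬝ᵥ v / v ⬝ᵥ v) * v j) ^ 2 < ∑ j, (u j - t * v j) ^ 2 := by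
  have hvv : 0 < v ⬝ᵥ v := lt_of_le_of_ne (dotProduct_self_star_nonneg v)
    (Ne.symm (mt dotProduct_self_eq_zero.mp hv))
  rw [sum_sq_sub_mul_eq u v hvv.ne', sum_sq_sub_mul_eq u v hvv.ne']
  exact (add_lt_add_iff_left _).mpr (mul_lt_mul_of_pos_left (sq_max_zero_sub_lt_sq_sub ht hne) hvv)

lemma sum_sq_sub_max_zero_mul_le {u v : ι → ℝ} (hv : v ≠ 0) {t : ℝ} (ht : 0 ≤ t) :
    ∑ j, (u j - max 0 (u ⬝ᵥ v / v ⬝ᵥ v) * v j) ^ 2 ≤ ∑ j, (u j - t * v j) ^ 2 := by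
  rcases eq_or_ne t (max 0 (u ⬝ᵥ v / v ⬝ᵥ v)) with rfl | hne
  · rfl
  · exact (sum_sq_sub_max_zero_mul_lt hv ht hne).le

end LeastSquares

section UpdateCol

variable {l m n : Type*} [Fintype m] [DecidableEq m]

lemma updateCol_mul_apply {α : Type*} [NonUnitalNonAssocRing α] (W : Matrix l m α)
    (H : Matrix m n α) (p : m) (v : l → α) (i : l) (j : n) :
    (W.updateCol p v * H) i j = (W.updateCol p 0 * H) i j + v i * H p j := by
  rw [← sub_eq_iff_eq_add', mul_apply, mul_apply, ← sum_sub_distrib, Fintype.sum_eq_single p]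
  · simp
  · intro k hk
    simp [hk]

lemma sum_updateCol_zero_mul {α : Type*} [NonUnitalNonAssocSemiring α] (W : Matrix l m α)
    (p : m) (f : m → α) (i : l) :
    ∑ k, W.updateCol p 0 i k * f k = ∑ k ∈ univ \ {p}, W i k * f k := by
  simp [updateCol_apply, sum_ite, filter_ne', sdiff_singleton_eq_erase]

lemma sub_updateCol_zero_mul_dotProduct {α : Type*} [CommRing α] [Fintype n]
    (M : Matrix l n α) (W : Matrix l m α) (H : Matrix m n α) (p : m) (i : l) :
    (M - W.updateCol p 0 * H) i ⬝ᵥ H p =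
      (M * Hᵀ) i p - ∑ k ∈ univ \ {p}, W i k * (H * Hᵀ) k p := by
  have hdot : (M - W.updateCol p 0 * H) i ⬝ᵥ H p = ((M - W.updateCol p 0 * H) * Hᵀ) i p := rfl
  rw [hdot, Matrix.sub_mul, Matrix.mul_assoc, Matrix.sub_apply, mul_apply (M := W.updateCol p 0),
    sum_updateCol_zero_mul]

end UpdateCol

/-- The HALS closed-form update `w*` of the `p`-th column of `W` is the unique
solution of the corresponding nonnegative least squares subproblem. -/
theorem hals_column_update_unique_minimizer {m n r : ℕ}
    (M : Matrix (Fin m) (Fin n) ℝ)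
    (W : Matrix (Fin m) (Fin r) ℝ)
    (H : Matrix (Fin r) (Fin n) ℝ)
    (p : Fin r) (hHp : H p ≠ 0)
    (wStar : Fin m → ℝ)
    (hwStar : ∀ i, wStar i = max 0
      (((M * Hᵀ) i p - ∑ l ∈ univ \ {p}, W i l * (H * Hᵀ) l p) / (H * Hᵀ) p p)) :
    ∀ w : Fin m → ℝ, (∀ i, 0 ≤ w i) → w ≠ wStar →
      frobNorm (M - (W.updateCol p wStar) * H) <
        frobNorm (M - (W.updateCol p w) * H) := by
  intro w hw hne
  set R := M - W.updateCol p 0 * H with hR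
  have hwStar_eq : wStar = fun i => max 0 (R i ⬝ᵥ H p / H p ⬝ᵥ H p) := by
    funext i
    rw [hwStar, hR, sub_updateCol_zero_mul_dotProduct]
    rfl
  have hentry : ∀ v i j, (M - W.updateCol p v * H) i j = R i j - v i * H p j := by
    intro v i j
    rw [Matrix.sub_apply, updateCol_mul_apply, hR, Matrix.sub_apply]
    ring
  obtain ⟨i₀, hi₀⟩ := Function.ne_iff.mp hne
  subst hwStar_eq
  refine Real.sqrt_lt_sqrt (by positivity) ?_
  simp only [hentry]
  exact sum_lt_sum (fun i _ => sum_sq_sub_max_zero_mul_le hHp (hw i))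
    ⟨i₀, mem_univ _, sum_sq_sub_max_zero_mul_lt hHp (hw i₀) hi₀⟩
end

section
/- Let M ∈ ℝ^{m×n}, W ∈ ℝ^{m×r} with nonnegative entries, H ∈ ℝ^{r×n}, and fix p with H_{p:} ≠ 0. Let W' be obtained from W by replacing its p-th column with the HALS update w*, where w*_i = max(0, ((M Hᵀ)_{ip} − Σ_{l≠p} W_{il} (H Hᵀ)_{lp}) / (H Hᵀ)_{pp}). Then W' has nonnegative entries and ‖M − W' H‖_F ≤ ‖M − W H‖_F. -/
open Matrix Finset

lemma quadratic_le_at_max_zero_div {a b : ℝ} (ha : 0 < a) {y : ℝ} (hy : 0 ≤ y) :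
    a * max 0 (b / a) ^ 2 - 2 * b * max 0 (b / a) ≤ a * y ^ 2 - 2 * b * y := by
  rcases le_or_gt b 0 with hb | hb
  · rw [max_eq_left (div_nonpos_of_nonpos_of_nonneg hb ha.le)]
    nlinarith
  · rw [max_eq_right (div_pos hb ha).le]
    have : a * (y - b / a) ^ 2 = a * y ^ 2 - 2 * b * y - (a * (b / a) ^ 2 - 2 * b * (b / a)) := by
      field_simp
      ring
    nlinarith [mul_nonneg ha.le (sq_nonneg (y - b / a))]

section RayProjection

variable {ι : Type*} [Fintype ι]

lemma dotProduct_sub_smul_self (u h : ι → ℝ) (x : ℝ) :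
    (u - x • h) ⬝ᵥ (u - x • h) = u ⬝ᵥ u + ((h ⬝ᵥ h) * x ^ 2 - 2 * (u ⬝ᵥ h) * x) := by
  simp only [sub_dotProduct, dotProduct_sub, smul_dotProduct, dotProduct_smul, smul_eq_mul,
    dotProduct_comm h u]
  ring

lemma dotProduct_self_pos {h : ι → ℝ} (hh : h ≠ 0) : 0 < h ⬝ᵥ h :=
  lt_of_le_of_ne (Fintype.sum_nonneg fun i => mul_self_nonneg (h i))
    (Ne.symm (dotProduct_self_eq_zero.not.mpr hh))

lemma dotProduct_self_sub_max_smul_le (u : ι → ℝ) {h : ι → ℝ} (hh : h ≠ 0) {y : ℝ}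
    (hy : 0 ≤ y) :
    (u - max 0 (u ⬝ᵥ h / h ⬝ᵥ h) • h) ⬝ᵥ (u - max 0 (u ⬝ᵥ h / h ⬝ᵥ h) • h) ≤
      (u - y • h) ⬝ᵥ (u - y • h) := by
  simp only [dotProduct_sub_smul_self]
  gcongr 1
  exact quadratic_le_at_max_zero_div (dotProduct_self_pos hh) hy

end RayProjection

lemma mul_transpose_apply {ι κ ν : Type*} [Fintype ν] (A : Matrix ι ν ℝ) (B : Matrix κ ν ℝ)
    (i : ι) (k : κ) : (A * Bᵀ) i k = A i ⬝ᵥ B k := rfl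

lemma frobNorm_le_of_dotProduct_row_le {m n : ℕ} {A B : Matrix (Fin m) (Fin n) ℝ}
    (h : ∀ i, A i ⬝ᵥ A i ≤ B i ⬝ᵥ B i) : frobNorm A ≤ frobNorm B := by
  refine Real.sqrt_le_sqrt (sum_le_sum fun i _ => ?_)
  simpa only [dotProduct, sq] using h i

section UpdateCol

variable {ι κ ν : Type*} [DecidableEq κ]

lemma updateCol_nonneg {W : Matrix ι κ ℝ} (hW : ∀ i l, 0 ≤ W i l) (p : κ) {w : ι → ℝ}
    (hw : ∀ i, 0 ≤ w i) (i : ι) (l : κ) : 0 ≤ W.updateCol p w i l := by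
  rw [updateCol_apply]
  split_ifs
  exacts [hw i, hW i l]

lemma sum_sdiff_singleton_mul_apply [Fintype κ] (W : Matrix ι κ ℝ) (G : Matrix κ ν ℝ) (p : κ)
    (i : ι) (q : ν) :
    ∑ l ∈ univ \ {p}, W i l * G l q = (W.updateCol p 0 * G) i q := by
  rw [mul_apply, sdiff_singleton_eq_erase, ← sum_erase univ (a := p) (by simp)]
  refine sum_congr rfl fun l hl => ?_
  rw [updateCol_ne (ne_of_mem_erase hl)]

lemma updateCol_mul_apply_row [Fintype κ] (W : Matrix ι κ ℝ) (H : Matrix κ ν ℝ) (p : κ)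
    (w : ι → ℝ) (i : ι) :
    (W.updateCol p w * H) i = (W.updateCol p 0 * H) i + w i • H p := by
  ext j
  simp only [mul_apply, Pi.add_apply, Pi.smul_apply, smul_eq_mul]
  rw [← add_sum_erase _ _ (mem_univ p), ← add_sum_erase _ _ (mem_univ p)]
  have : ∀ l ∈ univ.erase p, W.updateCol p w i l = W.updateCol p 0 i l := fun l hl => by
    rw [updateCol_ne (ne_of_mem_erase hl), updateCol_ne (ne_of_mem_erase hl)]
  simp only [updateCol_self, Pi.zero_apply, zero_mul, zero_add,
    sum_congr rfl fun l hl => congrArg (· * H l j) (this l hl)]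
  ring

lemma hals_numerator_eq_dotProduct [Fintype κ] [Fintype ν] (M : Matrix ι ν ℝ) (W : Matrix ι κ ℝ)
    (H : Matrix κ ν ℝ) (p : κ) (i : ι) :
    (M * Hᵀ) i p - ∑ l ∈ univ \ {p}, W i l * (H * Hᵀ) l p =
      (M - W.updateCol p 0 * H) i ⬝ᵥ H p := by
  rw [sum_sdiff_singleton_mul_apply, ← Matrix.mul_assoc, ← Matrix.sub_apply, ← Matrix.sub_mul]
  rfl

lemma sub_updateCol_mul_row [Fintype κ] (M : Matrix ι ν ℝ) (W : Matrix ι κ ℝ) (H : Matrix κ ν ℝ)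
    (p : κ) (w : ι → ℝ) (i : ι) :
    (M - W.updateCol p w * H) i = (M - W.updateCol p 0 * H) i - w i • H p := by
  ext j
  simp only [Matrix.sub_apply, Pi.sub_apply, congrFun (updateCol_mul_apply_row W H p w i) j,
    Pi.add_apply]
  ring

end UpdateCol

/-- The HALS update of the `p`-th column of `W` keeps `W` nonnegative and does not
increase the Frobenius norm of the residual. -/
theorem hals_column_update_nonincreasing {m n r : ℕ}
    (M : Matrix (Fin m) (Fin n) ℝ)
    (W : Matrix (Fin m) (Fin r) ℝ) (hW : ∀ i l, 0 ≤ W i l)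
    (H : Matrix (Fin r) (Fin n) ℝ)
    (p : Fin r) (hHp : H p ≠ 0)
    (wStar : Fin m → ℝ)
    (hwStar : ∀ i, wStar i = max 0
      (((M * Hᵀ) i p - ∑ l ∈ univ \ {p}, W i l * (H * Hᵀ) l p) / (H * Hᵀ) p p))
    (W' : Matrix (Fin m) (Fin r) ℝ) (hW' : W' = W.updateCol p wStar) :
    (∀ i l, 0 ≤ W' i l) ∧
    frobNorm (M - W' * H) ≤ frobNorm (M - W * H) := by
  subst hW'
  refine ⟨updateCol_nonneg hW p (fun i => by simp [hwStar]),
    frobNorm_le_of_dotProduct_row_le fun i => ?_⟩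
  rw [sub_updateCol_mul_row, hwStar, hals_numerator_eq_dotProduct, mul_transpose_apply]
  conv_rhs => rw [← updateCol_eq_self W p, sub_updateCol_mul_row]
  exact dotProduct_self_sub_max_smul_le _ hHp (hW i p)
end

section
/- Let M ∈ ℝ^{m×n}, W ∈ ℝ^{m×r}, H ∈ ℝ^{r×n}, and fix p with the p-th row H_{p:} of H nonzero. Then the function g : ℝ^m → ℝ defined by g(w) = ‖M − W[p←w] H‖_F², where W[p←w] is W with its p-th column replaced by w, is strictly convex on ℝ^m. -/
/-!
The residual `w ↦ M - W[p←w] H` is an affine function of `w` whose linear part is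
`w ↦ -w H_{p:}`, an outer product, hence injective once `H_{p:} ≠ 0`. The squared Frobenius
norm is a sum of squares of the entries, so it is strictly convex, and strict convexity survives
precomposition with an injective affine map.
-/

open Matrix

open Set Function

section StrictConvexity

variable {𝕜 E β : Type*} [Ring 𝕜] [PartialOrder 𝕜] [AddCommGroup E] [Module 𝕜 E]
  [AddCommMonoid β] [PartialOrder β]

theorem StrictConvexOn.comp_affineMap {F : Type*} [AddCommGroup F] [Module 𝕜 F] [SMul 𝕜 β]
    {f : F → β} {s : Set F} (hf : StrictConvexOn 𝕜 s f) (g : E →ᵃ[𝕜] F) (hg : Injective g) :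
    StrictConvexOn 𝕜 (g ⁻¹' s) (f ∘ g) :=
  ⟨hf.1.affine_preimage g, fun x hx y hy hxy a b ha hb hab => by
    simpa only [Function.comp_apply, Convex.combo_affine_apply hab] using
      hf.2 hx hy (hg.ne hxy) ha hb hab⟩

theorem StrictConvexOn.sum_apply {ι : Type*} [Fintype ι] [IsOrderedCancelAddMonoid β]
    [Module 𝕜 β] {φ : E → β} {s : Set E} (hφ : StrictConvexOn 𝕜 s φ) :
    StrictConvexOn 𝕜 (univ.pi fun _ => s) fun x : ι → E => ∑ i, φ (x i) := by
  refine ⟨convex_pi fun i _ => hφ.1, fun x hx y hy hxy a b ha hb hab => ?_⟩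
  obtain ⟨i₀, hi₀⟩ := ne_iff.mp hxy
  simp only [Pi.add_apply, Pi.smul_apply, Finset.smul_sum, ← Finset.sum_add_distrib]
  exact Finset.sum_lt_sum
    (fun i _ => hφ.convexOn.2 (hx i trivial) (hy i trivial) ha.le hb.le hab)
    ⟨i₀, Finset.mem_univ _, hφ.2 (hx i₀ trivial) (hy i₀ trivial) hi₀ ha hb hab⟩

end StrictConvexity

theorem strictConvexOn_sum_sum_sq {ι κ : Type*} [Fintype ι] [Fintype κ] :
    StrictConvexOn ℝ univ fun A : ι → κ → ℝ => ∑ i, ∑ j, A i j ^ 2 := by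
  have h := ((Even.strictConvexOn_pow even_two two_ne_zero).sum_apply (ι := κ)).sum_apply (ι := ι)
  simpa only [Set.pi_univ] using h

theorem frobNorm_sq {m n : ℕ} (A : Matrix (Fin m) (Fin n) ℝ) :
    frobNorm A ^ 2 = ∑ i, ∑ j, A i j ^ 2 :=
  Real.sq_sqrt (by positivity)

namespace Matrix

variable {l m n R : Type*} [Fintype m] [DecidableEq m] [CommRing R]

theorem updateCol_mul (W : Matrix l m R) (p : m) (w : l → R) (H : Matrix m n R) :
    W.updateCol p w * H = W.updateCol p 0 * H + vecMulVec w (H p) := by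
  ext i j
  simp [mul_apply, updateCol_apply, ite_mul, Finset.sum_ite, Finset.filter_eq', add_comm,
    vecMulVec_apply]

theorem vecMulVec_left_injective [NoZeroDivisors R] {v : n → R} (hv : v ≠ 0) :
    Injective fun w : l → R => vecMulVec w v := fun x y hxy => by
  obtain ⟨j, hj⟩ := ne_iff.mp hv
  funext i
  exact mul_right_cancel₀ hj (congrFun (congrFun hxy i) j)

noncomputable def updateColResidual (M : Matrix l n R) (W : Matrix l m R) (H : Matrix m n R)
    (p : m) : (l → R) →ᵃ[R] Matrix l n R :=
  AffineMap.const R _ (M - W.updateCol p 0 * H) - ((vecMulVecBilin R R).flip (H p)).toAffineMap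

theorem updateColResidual_apply (M : Matrix l n R) (W : Matrix l m R) (H : Matrix m n R) (p : m)
    (w : l → R) : updateColResidual M W H p w = M - W.updateCol p w * H := by
  simp [updateColResidual, updateCol_mul W p w H, sub_add_eq_sub_sub]

theorem updateColResidual_injective [NoZeroDivisors R] (M : Matrix l n R) (W : Matrix l m R)
    {H : Matrix m n R} {p : m} (hHp : H p ≠ 0) : Injective (updateColResidual M W H p) := by
  intro x y hxy
  rw [updateColResidual_apply, updateColResidual_apply, sub_right_inj, updateCol_mul W p x,
    updateCol_mul W p y, add_right_inj] at hxy
  exact vecMulVec_left_injective hHp hxy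

end Matrix

/-- If the `p`-th row of `H` is nonzero, the HALS column subproblem
`w ↦ ‖M − W[p←w] H‖_F²` is strictly convex on `ℝ^m`. -/
theorem hals_column_subproblem_strictly_convex {m n r : ℕ}
    (M : Matrix (Fin m) (Fin n) ℝ)
    (W : Matrix (Fin m) (Fin r) ℝ)
    (H : Matrix (Fin r) (Fin n) ℝ)
    (p : Fin r) (hHp : H p ≠ 0) :
    StrictConvexOn ℝ Set.univ
      (fun w : Fin m → ℝ => frobNorm (M - (W.updateCol p w) * H) ^ 2) := by
  have hsq : StrictConvexOn ℝ univ fun A : Matrix (Fin m) (Fin n) ℝ => frobNorm A ^ 2 := by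
    simp only [frobNorm_sq]
    exact strictConvexOn_sum_sum_sq
  simpa only [comp_def, updateColResidual_apply, preimage_univ] using
    hsq.comp_affineMap _ (updateColResidual_injective M W hHp)
end
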